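/- Interaction Lemma: Let d_embd = 5, let l ≥ 2 be an integer, let 1 ≤ t1, t2 ≤ l and 1 ≤ i ≤ 5, and let kappa, M ≥ 1. For 1 ≤ t ≤ l define the interaction vector I_t = (cos(t·pi/(2l)), sin(t·pi/(2l))) in R^2. Let Q^B, K^B in R^{2×5} have all entries bounded in absolute value by kappa. Then there exist matrices Q, K, V in R^{5×5}, all of whose entries are bounded in absolute value by C·kappa^2·M^2·l^2 for an absolute constant C, such that for every matrix H in R^{5×l} with ||H||_∞ ≤ M whose t-th column h_t satisfies (h_t^3, h_t^4) = I_t and h_t^5 = 1 for all t, the ReLU attention head A with parameters Q, K, V satisfies: the t1-th column of A(H) equals sigma(⟨Q^B h_{t1}, K^B h_{t2}⟩)·e_i, and the t-th column of A(H) is the zero vector for every t ≠ t1. Here e_i is the i-th standard basis vector of R^5 and sigma(t) = max(0,t). -/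

import Mathlib

open Matrix Finset Real MeasureTheory

noncomputable section

/-- The ReLU activation function. -/
def relu (t : ℝ) : ℝ := max 0 t

/-- A ReLU attention head with query, key and value matrices `Q K V`, acting on an
embedding matrix `H ∈ ℝ^{de × l}`:  the `i`-th column of `A(H)` is
`∑ j σ(⟨Q h_i, K h_j⟩) V h_j`. -/
def attnHead {de l : ℕ} (Q K V : Matrix (Fin de) (Fin de) ℝ)
    (H : Matrix (Fin de) (Fin l) ℝ) : Matrix (Fin de) (Fin l) ℝ :=
  Matrix.of fun a i => ∑ j : Fin l,
    relu (∑ b : Fin de, Q.mulVec (fun c => H c i) b * K.mulVec (fun c => H c j) b) *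
      V.mulVec (fun c => H c j) a

/-- Multi-headed attention layer with `m` heads. -/
def mha {de l : ℕ} (m : ℕ) (Q K V : ℕ → Matrix (Fin de) (Fin de) ℝ)
    (H : Matrix (Fin de) (Fin l) ℝ) : Matrix (Fin de) (Fin l) ℝ :=
  ∑ j ∈ Finset.range m, attnHead (Q j) (K j) (V j) H

/-! The query and key matrices compute, besides the data kernel `⟨Q^B h_t, K^B h_j⟩`, the two
positional penalties `λ (cos (θ_{t₁} - θ_t) - 1)` and `λ (cos (θ_{t₂} - θ_j) - 1)`, read off the
coordinates `(cos θ, sin θ, 1)` of the tokens. They vanish for `t = t₁`, `j = t₂`; otherwise one of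
them is at most `-λ / (2 l²)`, because distinct angles differ by `x` with `π / (2l) ≤ |x| ≤ π / 2`
and `cos x ≤ 1 - 2 x² / π²`. With `λ = 100 κ² M² l²` this beats the kernel, which is at most
`50 κ² M²`, so the ReLU kills every other pair, and `V = e_i e_5ᵀ` turns the constant coordinate
into `e_i`. -/

theorem abs_dotProduct_le {ι : Type*} [Fintype ι] {u v : ι → ℝ} {U W : ℝ}
    (hu : ∀ i, |u i| ≤ U) (hv : ∀ i, |v i| ≤ W) :
    |u ⬝ᵥ v| ≤ Fintype.card ι * (U * W) := by
  calc |u ⬝ᵥ v| ≤ ∑ i, |u i * v i| := Finset.abs_sum_le_sum_abs _ _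
    _ ≤ ∑ _i : ι, U * W := Finset.sum_le_sum fun i _ => by
      rw [abs_mul]
      exact mul_le_mul (hu i) (hv i) (abs_nonneg _) ((abs_nonneg _).trans (hu i))
    _ = Fintype.card ι * (U * W) := by simp

theorem abs_mulVec_dotProduct_mulVec_le {m n : Type*} [Fintype m] [Fintype n]
    {A B : Matrix m n ℝ} {x y : n → ℝ} {κ M : ℝ} (hA : ∀ a b, |A a b| ≤ κ)
    (hB : ∀ a b, |B a b| ≤ κ) (hx : ∀ b, |x b| ≤ M) (hy : ∀ b, |y b| ≤ M) :
    |(A *ᵥ x) ⬝ᵥ (B *ᵥ y)| ≤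
      Fintype.card m * ((Fintype.card n * (κ * M)) * (Fintype.card n * (κ * M))) :=
  abs_dotProduct_le (fun a => abs_dotProduct_le (hA a) hx) (fun a => abs_dotProduct_le (hB a) hy)

theorem abs_piSingle_le {ι : Type*} [DecidableEq ι] {i : ι} {x c : ℝ} (hx : |x| ≤ c)
    (hc : 0 ≤ c) (b : ι) : |(Pi.single i x : ι → ℝ) b| ≤ c := by
  rw [Pi.single_apply]
  split_ifs <;> simp [hx, hc]

theorem abs_single_le {m n : Type*} [DecidableEq m] [DecidableEq n] {i : m} {j : n} {x c : ℝ}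
    (hx : |x| ≤ c) (hc : 0 ≤ c) (a : m) (b : n) : |single i j x a b| ≤ c := by
  rw [single_apply]
  split_ifs <;> simp [hx, hc]

theorem relu_eq_zero_of_nonpos {x : ℝ} (hx : x ≤ 0) : relu x = 0 := max_eq_left hx

theorem attnHead_apply {de l : ℕ} (Q K V : Matrix (Fin de) (Fin de) ℝ)
    (H : Matrix (Fin de) (Fin l) ℝ) (a : Fin de) (t : Fin l) :
    attnHead Q K V H a t = ∑ j, relu ((Q *ᵥ Hᵀ t) ⬝ᵥ (K *ᵥ Hᵀ j)) * (V *ᵥ Hᵀ j) a :=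
  rfl

theorem attnHead_apply_of_relu_eq_zero {de l : ℕ} {Q K V : Matrix (Fin de) (Fin de) ℝ}
    {H : Matrix (Fin de) (Fin l) ℝ} {t s : Fin l}
    (hs : ∀ j ≠ s, relu ((Q *ᵥ Hᵀ t) ⬝ᵥ (K *ᵥ Hᵀ j)) = 0) (a : Fin de) :
    attnHead Q K V H a t = relu ((Q *ᵥ Hᵀ t) ⬝ᵥ (K *ᵥ Hᵀ s)) * (V *ᵥ Hᵀ s) a := by
  rw [attnHead_apply, Finset.sum_eq_single s (fun j _ hj => by rw [hs j hj, zero_mul])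
    (fun h => absurd (Finset.mem_univ s) h)]

/-- Tokens are indexed from `0`, so this is the paper's angle `t π / (2 l)` of token `t + 1`. -/
def interactionAngle (l : ℕ) (t : Fin l) : ℝ := ((t : ℕ) + 1) * π / (2 * l)

theorem cos_interactionAngle_sub_le {l : ℕ} {s t : Fin l} (hst : s ≠ t) :
    cos (interactionAngle l s - interactionAngle l t) ≤ 1 - 1 / (2 * l ^ 2) := by
  have hl : (0 : ℝ) < l := by exact_mod_cast s.pos
  have hs : ((s : ℕ) : ℝ) < l := by exact_mod_cast s.isLt
  have ht : ((t : ℕ) : ℝ) < l := by exact_mod_cast t.isLt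
  set d : ℝ := (s : ℕ) - (t : ℕ)
  have hd : 1 ≤ d ^ 2 := by
    rcases Nat.lt_or_gt_of_ne (Fin.val_ne_of_ne hst) with h | h
    · have : ((s : ℕ) : ℝ) + 1 ≤ (t : ℕ) := by exact_mod_cast h
      nlinarith
    · have : ((t : ℕ) : ℝ) + 1 ≤ (s : ℕ) := by exact_mod_cast h
      nlinarith
  have hdl : |d| ≤ l := abs_le.2 ⟨by linarith, by linarith⟩
  have harg : interactionAngle l s - interactionAngle l t = d * π / (2 * l) := by
    simp only [interactionAngle, d]; ring
  have hx : |d * π / (2 * l)| ≤ π := by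
    rw [abs_div, abs_mul, abs_of_pos pi_pos, abs_of_pos (by positivity : (0 : ℝ) < 2 * l),
      div_le_iff₀ (by positivity)]
    nlinarith [pi_pos]
  rw [harg]
  calc cos (d * π / (2 * l)) ≤ 1 - 2 / π ^ 2 * (d * π / (2 * l)) ^ 2 :=
        cos_le_one_sub_mul_cos_sq hx
    _ = 1 - d ^ 2 / (2 * l ^ 2) := by field_simp
    _ ≤ 1 - 1 / (2 * l ^ 2) := by gcongr

theorem interactionAngle_penalty_le {l : ℕ} {s t : Fin l} (hst : s ≠ t) {lam : ℝ}
    (hlam : 0 ≤ lam) :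
    lam * (cos (interactionAngle l s - interactionAngle l t) - 1) ≤ -(lam / (2 * l ^ 2)) := by
  have := mul_le_mul_of_nonneg_left (cos_interactionAngle_sub_le hst) hlam
  linarith [mul_one_div lam (2 * (l : ℝ) ^ 2)]

def interactionRow (lam θ : ℝ) : Fin 5 → ℝ := lam • ![0, 0, cos θ, sin θ, -1]

theorem interactionRow_dotProduct {lam θ α : ℝ} {x : Fin 5 → ℝ} (h2 : x 2 = cos α)
    (h3 : x 3 = sin α) (h4 : x 4 = 1) :
    interactionRow lam θ ⬝ᵥ x = lam * (cos (θ - α) - 1) := by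
  simp [interactionRow, dotProduct, Fin.sum_univ_five, h2, h3, h4, cos_sub]
  ring

theorem abs_interactionRow_le {lam : ℝ} (hlam : 0 ≤ lam) (θ : ℝ) (b : Fin 5) :
    |interactionRow lam θ b| ≤ lam := by
  have h : |![(0 : ℝ), 0, cos θ, sin θ, -1] b| ≤ 1 := by
    fin_cases b <;> simp [abs_cos_le_one, abs_sin_le_one]
  simpa [interactionRow, abs_mul, abs_of_nonneg hlam] using mul_le_mul_of_nonneg_left h hlam

def stackRows {R n : Type*} [Zero R] (B : Matrix (Fin 2) n R) (u v : n → R) :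
    Matrix (Fin 5) n R :=
  of ![B 0, B 1, u, v, 0]

theorem stackRows_mulVec_dotProduct {R n : Type*} [CommRing R] [Fintype n]
    (B B' : Matrix (Fin 2) n R) (u v u' v' x y : n → R) :
    (stackRows B u v *ᵥ x) ⬝ᵥ (stackRows B' u' v' *ᵥ y) =
      (B *ᵥ x) ⬝ᵥ (B' *ᵥ y) + (u ⬝ᵥ x) * (u' ⬝ᵥ y) + (v ⬝ᵥ x) * (v' ⬝ᵥ y) := by
  simp [stackRows, dotProduct, Fin.sum_univ_five, Fin.sum_univ_two, mulVec]

theorem abs_stackRows_le {n : Type*} {B : Matrix (Fin 2) n ℝ} {u v : n → ℝ} {c : ℝ}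
    (hB : ∀ a b, |B a b| ≤ c) (hu : ∀ b, |u b| ≤ c) (hv : ∀ b, |v b| ≤ c) (hc : 0 ≤ c)
    (a : Fin 5) (b : n) : |stackRows B u v a b| ≤ c := by
  fin_cases a <;> simp [stackRows, hB, hu, hv, hc]

def interactionQuery (B : Matrix (Fin 2) (Fin 5) ℝ) (lam θ : ℝ) : Matrix (Fin 5) (Fin 5) ℝ :=
  stackRows B (interactionRow lam θ) (Pi.single 4 1)

def interactionKey (B : Matrix (Fin 2) (Fin 5) ℝ) (lam θ : ℝ) : Matrix (Fin 5) (Fin 5) ℝ :=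
  stackRows B (Pi.single 4 1) (interactionRow lam θ)

theorem interactionQuery_mulVec_dotProduct_interactionKey {B B' : Matrix (Fin 2) (Fin 5) ℝ}
    {lam θ θ' α β : ℝ} {x y : Fin 5 → ℝ} (hx2 : x 2 = cos α) (hx3 : x 3 = sin α) (hx4 : x 4 = 1)
    (hy2 : y 2 = cos β) (hy3 : y 3 = sin β) (hy4 : y 4 = 1) :
    (interactionQuery B lam θ *ᵥ x) ⬝ᵥ (interactionKey B' lam θ' *ᵥ y) =
      (B *ᵥ x) ⬝ᵥ (B' *ᵥ y) + lam * (cos (θ - α) - 1) + lam * (cos (θ' - β) - 1) := by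
  rw [interactionQuery, interactionKey, stackRows_mulVec_dotProduct,
    interactionRow_dotProduct hx2 hx3 hx4, interactionRow_dotProduct hy2 hy3 hy4,
    single_dotProduct, single_dotProduct, hx4, hy4]
  ring

theorem abs_interactionQuery_le {B : Matrix (Fin 2) (Fin 5) ℝ} {lam : ℝ}
    (hB : ∀ a b, |B a b| ≤ lam) (hlam : 1 ≤ lam) (θ : ℝ) (a b : Fin 5) :
    |interactionQuery B lam θ a b| ≤ lam :=
  have hlam0 : 0 ≤ lam := zero_le_one.trans hlam
  abs_stackRows_le hB (abs_interactionRow_le hlam0 θ) (abs_piSingle_le (by simpa using hlam) hlam0)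
    hlam0 a b

theorem abs_interactionKey_le {B : Matrix (Fin 2) (Fin 5) ℝ} {lam : ℝ}
    (hB : ∀ a b, |B a b| ≤ lam) (hlam : 1 ≤ lam) (θ : ℝ) (a b : Fin 5) :
    |interactionKey B lam θ a b| ≤ lam :=
  have hlam0 : 0 ≤ lam := zero_le_one.trans hlam
  abs_stackRows_le hB (abs_piSingle_le (by simpa using hlam) hlam0) (abs_interactionRow_le hlam0 θ)
    hlam0 a b

def HasInteractionCoords {l : ℕ} (H : Matrix (Fin 5) (Fin l) ℝ) : Prop :=
  ∀ t, H 2 t = cos (interactionAngle l t) ∧ H 3 t = sin (interactionAngle l t) ∧ H 4 t = 1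

section InteractionHead

variable {l : ℕ} {t₁ t₂ : Fin l} {QB KB : Matrix (Fin 2) (Fin 5) ℝ} {lam : ℝ}
  {H : Matrix (Fin 5) (Fin l) ℝ}

theorem interaction_score (hH : HasInteractionCoords H) (t j : Fin l) :
    (interactionQuery QB lam (interactionAngle l t₁) *ᵥ Hᵀ t) ⬝ᵥ
        (interactionKey KB lam (interactionAngle l t₂) *ᵥ Hᵀ j) =
      (QB *ᵥ Hᵀ t) ⬝ᵥ (KB *ᵥ Hᵀ j) +
        lam * (cos (interactionAngle l t₁ - interactionAngle l t) - 1) +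
        lam * (cos (interactionAngle l t₂ - interactionAngle l j) - 1) :=
  interactionQuery_mulVec_dotProduct_interactionKey (hH t).1 (hH t).2.1 (hH t).2.2
    (hH j).1 (hH j).2.1 (hH j).2.2

theorem relu_interaction_score_eq_zero (hlam : 0 ≤ lam) (hH : HasInteractionCoords H)
    (hkernel : ∀ t j, (QB *ᵥ Hᵀ t) ⬝ᵥ (KB *ᵥ Hᵀ j) ≤ lam / (2 * l ^ 2)) {t j : Fin l}
    (htj : t ≠ t₁ ∨ j ≠ t₂) :
    relu ((interactionQuery QB lam (interactionAngle l t₁) *ᵥ Hᵀ t) ⬝ᵥ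
      (interactionKey KB lam (interactionAngle l t₂) *ᵥ Hᵀ j)) = 0 := by
  have hpen : ∀ s t : Fin l, lam * (cos (interactionAngle l s - interactionAngle l t) - 1) ≤ 0 :=
    fun _ _ => mul_nonpos_of_nonneg_of_nonpos hlam (sub_nonpos.2 (cos_le_one _))
  refine relu_eq_zero_of_nonpos ?_
  rw [interaction_score hH]
  rcases htj with ht | hj
  · linarith [hkernel t j, interactionAngle_penalty_le (Ne.symm ht) hlam, hpen t₂ j]
  · linarith [hkernel t j, interactionAngle_penalty_le (Ne.symm hj) hlam, hpen t₁ t]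

theorem single_mulVec_of_hasInteractionCoords (hH : HasInteractionCoords H) (i : Fin 5)
    (j : Fin l) : single i 4 1 *ᵥ Hᵀ j = Pi.single i 1 := by
  rw [single_mulVec, transpose_apply, (hH j).2.2, one_mul]
  rfl

theorem attnHead_interaction_apply_self (hlam : 0 ≤ lam) (hH : HasInteractionCoords H)
    (hkernel : ∀ t j, (QB *ᵥ Hᵀ t) ⬝ᵥ (KB *ᵥ Hᵀ j) ≤ lam / (2 * l ^ 2)) (i a : Fin 5) :
    attnHead (interactionQuery QB lam (interactionAngle l t₁))
        (interactionKey KB lam (interactionAngle l t₂)) (single i 4 1) H a t₁ =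
      if a = i then relu ((QB *ᵥ Hᵀ t₁) ⬝ᵥ (KB *ᵥ Hᵀ t₂)) else 0 := by
  rw [attnHead_apply_of_relu_eq_zero
      (fun j hj => relu_interaction_score_eq_zero hlam hH hkernel (Or.inr hj)),
    single_mulVec_of_hasInteractionCoords hH, interaction_score hH, sub_self, sub_self, cos_zero,
    sub_self, mul_zero, add_zero, add_zero, Pi.single_apply, mul_ite, mul_one, mul_zero]

theorem attnHead_interaction_apply_of_ne (hlam : 0 ≤ lam) (hH : HasInteractionCoords H)
    (hkernel : ∀ t j, (QB *ᵥ Hᵀ t) ⬝ᵥ (KB *ᵥ Hᵀ j) ≤ lam / (2 * l ^ 2)) (i : Fin 5) {t : Fin l}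
    (ht : t ≠ t₁) (a : Fin 5) :
    attnHead (interactionQuery QB lam (interactionAngle l t₁))
        (interactionKey KB lam (interactionAngle l t₂)) (single i 4 1) H a t = 0 := by
  rw [attnHead_apply_of_relu_eq_zero (s := t₂)
      (fun j _ => relu_interaction_score_eq_zero hlam hH hkernel (Or.inl ht)),
    relu_interaction_score_eq_zero hlam hH hkernel (Or.inl ht), zero_mul]

end InteractionHead

theorem interaction_lemma :
    ∃ C : ℝ, 0 < C ∧
      ∀ (l : ℕ), 2 ≤ l →
        ∀ (t₁ t₂ : Fin l) (i : Fin 5) (κ M : ℝ), 1 ≤ κ → 1 ≤ M →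
          ∀ QB KB : Matrix (Fin 2) (Fin 5) ℝ,
            (∀ a b, |QB a b| ≤ κ) → (∀ a b, |KB a b| ≤ κ) →
            ∃ Q K V : Matrix (Fin 5) (Fin 5) ℝ,
              (∀ a b, |Q a b| ≤ C * κ ^ 2 * M ^ 2 * l ^ 2) ∧
              (∀ a b, |K a b| ≤ C * κ ^ 2 * M ^ 2 * l ^ 2) ∧
              (∀ a b, |V a b| ≤ C * κ ^ 2 * M ^ 2 * l ^ 2) ∧
              ∀ H : Matrix (Fin 5) (Fin l) ℝ,
                (∀ a t, |H a t| ≤ M) →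
                (∀ t : Fin l,
                  H 2 t = Real.cos (((t : ℕ) + 1) * Real.pi / (2 * l)) ∧
                  H 3 t = Real.sin (((t : ℕ) + 1) * Real.pi / (2 * l)) ∧
                  H 4 t = 1) →
                (∀ a, attnHead Q K V H a t₁ =
                  if a = i then
                    relu (∑ b : Fin 2,
                      QB.mulVec (fun c => H c t₁) b * KB.mulVec (fun c => H c t₂) b)
                  else 0) ∧
                (∀ t : Fin l, t ≠ t₁ → ∀ a, attnHead Q K V H a t = 0) := by
  refine ⟨100, by norm_num, fun l hl t₁ t₂ i κ M hκ hM QB KB hQB hKB => ?_⟩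
  set lam : ℝ := 100 * κ ^ 2 * M ^ 2 * l ^ 2
  have hl1 : (1 : ℝ) ≤ l := by exact_mod_cast (by omega : 1 ≤ l)
  have hκlam : κ ≤ lam := by
    have : 1 ≤ κ * M ^ 2 * l ^ 2 := one_le_mul_of_one_le_of_one_le
      (one_le_mul_of_one_le_of_one_le hκ (one_le_pow₀ hM)) (one_le_pow₀ hl1)
    nlinarith
  have hlam : 1 ≤ lam := hκ.trans hκlam
  have hlam0 : 0 ≤ lam := zero_le_one.trans hlam
  refine ⟨interactionQuery QB lam (interactionAngle l t₁),
    interactionKey KB lam (interactionAngle l t₂), single i 4 1,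
    abs_interactionQuery_le (fun a b => (hQB a b).trans hκlam) hlam _,
    abs_interactionKey_le (fun a b => (hKB a b).trans hκlam) hlam _,
    abs_single_le (by simpa using hlam) hlam0, fun H hHM hH => ?_⟩
  have hkernel : ∀ t j, (QB *ᵥ Hᵀ t) ⬝ᵥ (KB *ᵥ Hᵀ j) ≤ lam / (2 * l ^ 2) := fun t j => by
    have := abs_mulVec_dotProduct_mulVec_le (x := Hᵀ t) (y := Hᵀ j) hQB hKB (fun b => hHM b t)
      (fun b => hHM b j)
    simp only [Fintype.card_fin, Nat.cast_ofNat] at this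
    have : lam / (2 * l ^ 2) = 50 * κ ^ 2 * M ^ 2 := by field_simp; ring
    linarith [le_abs_self ((QB *ᵥ Hᵀ t) ⬝ᵥ (KB *ᵥ Hᵀ j))]
  exact ⟨attnHead_interaction_apply_self hlam0 hH hkernel i,
    fun t ht => attnHead_interaction_apply_of_ne hlam0 hH hkernel i ht⟩

end
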